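/- In the setting where edges $ij$ ($i<j$) arrive as independent Poisson processes with rates $\mu_{ij} \ge 0$, $\sum_{i<j}\mu_{ij} \in (0,\infty)$, and $G_t$ is the resulting simple graph at time $t$ (with vertex set the endpoints of arrived edges), almost surely $v(G_t) = o(t)$ and $e(G_t) = o(t)$ as $t \to \infty$. -/

import Mathlib

/-
Let `N(t)` be the number of pairs with `T i j ≤ t`, i.e. `e(G_t)`. Given `k`, a finite set `F` of
pairs carries all but `δ = log 2 / (2k)` of the total rate. The pairs of `F` contribute at most
`#F`. If `N'(n)` counts the other pairs arrived by time `n`, independence gives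
`E[2^{N'(n)}] = ∏ (1 + P(T_p ≤ n)) ≤ e^{δn}`, so by Markov
`P(N'(n) > n/k) ≤ e^{δn} 2^{-n/k} = e^{-δn}`, which is summable; by Borel–Cantelli
`k N(n) ≤ n + O(1)` eventually, almost surely, and monotonicity in `t` gives `e(G_t) = o(t)`.
Every vertex of `G_t` is an endpoint of an edge of `G_{t+1}`, so `v(G_t) ≤ 2 e(G_{t+1})`.
-/

open MeasureTheory ProbabilityTheory Filter Finset Real
open scoped ENNReal

section IndependentEvents

variable {Ω ι : Type*}

lemma indicator_one_eq_natCast (A : Set Ω) (ω : Ω) :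
    A.indicator (fun _ => (1 : ℝ≥0∞)) ω = (A.indicator (fun _ => 1) ω : ℕ) := by
  by_cases h : ω ∈ A <;> simp [h]

lemma indicator_one_add_one (A : Set Ω) (ω : Ω) :
    A.indicator (fun _ => (1 : ℝ≥0∞)) ω + 1 = 2 ^ A.indicator (fun _ => 1) ω := by
  by_cases h : ω ∈ A <;> simp [h, one_add_one_eq_two]

lemma prod_indicator_add_one (s : Finset ι) (A : ι → Set Ω) (ω : Ω) :
    ∏ i ∈ s, ((A i).indicator (fun _ => (1 : ℝ≥0∞)) ω + 1) =
      2 ^ ∑ i ∈ s, (A i).indicator (fun _ => 1) ω := by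
  simp only [indicator_one_add_one, Finset.prod_pow_eq_pow_sum]

lemma ENNReal.exists_natCast_le_of_le_iSup {γ : Type*} [Nonempty γ] {f : γ → ℕ} {k : ℕ}
    (h : (k : ℝ≥0∞) ≤ ⨆ x, (f x : ℝ≥0∞)) : ∃ x, k ≤ f x := by
  rcases k with _ | k
  · exact ⟨Classical.arbitrary γ, Nat.zero_le _⟩
  · obtain ⟨x, hx⟩ := lt_iSup_iff.1 ((Nat.cast_lt.2 (Nat.lt_succ_self k)).trans_le h)
    exact ⟨x, Nat.cast_lt.1 hx⟩

lemma prod_add_one_le_ofReal_exp_sum (s : Finset ι) {a : ι → ℝ≥0∞} {c : ι → ℝ}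
    (hc : ∀ i, 0 ≤ c i) (ha : ∀ i, a i ≤ ENNReal.ofReal (c i)) :
    ∏ i ∈ s, (a i + 1) ≤ ENNReal.ofReal (exp (∑ i ∈ s, c i)) := by
  rw [exp_sum, ENNReal.ofReal_prod_of_nonneg fun i _ => (exp_pos _).le]
  refine Finset.prod_le_prod' fun i _ => ?_
  calc a i + 1 ≤ ENNReal.ofReal (c i + 1) := by
        rw [ENNReal.ofReal_add (hc i) zero_le_one, ENNReal.ofReal_one]; gcongr; exact ha i
    _ ≤ ENNReal.ofReal (exp (c i)) := ENNReal.ofReal_le_ofReal (add_one_le_exp _)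

lemma exp_le_exp_neg_pow_mul_two_pow (n : ℕ) {k : ℕ} (hk : 0 < k) :
    exp (n * (log 2 / (2 * k))) ≤ exp (-(log 2 / (2 * k))) ^ n * 2 ^ (n / k + 1) := by
  have hnk : (n : ℝ) ≤ k * (n / k + 1 : ℕ) := by exact_mod_cast (Nat.lt_mul_div_succ n hk).le
  have hk' : (0 : ℝ) < k := by exact_mod_cast hk
  rw [← exp_nat_mul, ← rpow_natCast, rpow_def_of_pos two_pos, ← exp_add]
  refine exp_le_exp.2 ?_
  have hlog := log_pos one_lt_two
  field_simp
  nlinarith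

variable [MeasurableSpace Ω] {P : Measure Ω} {A : ι → Set Ω}

lemma lintegral_prod_indicator_add_one (hA : iIndepSet A P) (hAm : ∀ i, MeasurableSet (A i))
    (s : Finset ι) :
    ∫⁻ ω, ∏ i ∈ s, ((A i).indicator (fun _ => (1 : ℝ≥0∞)) ω + 1) ∂P = ∏ i ∈ s, (P (A i) + 1) := by
  have := hA.isProbabilityMeasure
  have hind := (hA.iIndepFun_indicator (β := ℝ≥0∞)).comp (fun _ x => x + 1)
    fun _ => measurable_id.add_const 1
  have hprod := lintegral_prod_eq_prod_lintegral_of_indepFun s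
    (fun i ω => (A i).indicator (fun _ => (1 : ℝ≥0∞)) ω + 1) hind
    fun i => (measurable_const.indicator (hAm i)).add_const 1
  rw [hprod]
  refine Finset.prod_congr rfl fun i _ => ?_
  rw [lintegral_add_right _ measurable_const, lintegral_indicator_const (hAm i), one_mul,
    lintegral_one, measure_univ]

lemma measure_le_sum_indicator_le (hA : iIndepSet A P) (hAm : ∀ i, MeasurableSet (A i))
    (s : Finset ι) (k : ℕ) :
    P {ω | k ≤ ∑ i ∈ s, (A i).indicator (fun _ => 1) ω} ≤ (∏ i ∈ s, (P (A i) + 1)) / 2 ^ k := by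
  have hmeas : Measurable fun ω => ∏ i ∈ s, ((A i).indicator (fun _ => (1 : ℝ≥0∞)) ω + 1) :=
    Finset.measurable_prod _ fun i _ => (measurable_const.indicator (hAm i)).add_const 1
  calc P {ω | k ≤ ∑ i ∈ s, (A i).indicator (fun _ => 1) ω}
      ≤ P {ω | 2 ^ k ≤ ∏ i ∈ s, ((A i).indicator (fun _ => (1 : ℝ≥0∞)) ω + 1)} := by
        refine measure_mono fun ω hω => ?_
        simp only [Set.mem_ofPred_eq, prod_indicator_add_one] at hω ⊢
        exact pow_le_pow_right₀ one_le_two hω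
    _ ≤ (∫⁻ ω, ∏ i ∈ s, ((A i).indicator (fun _ => (1 : ℝ≥0∞)) ω + 1) ∂P) / 2 ^ k :=
        meas_ge_le_lintegral_div hmeas.aemeasurable (by simp) (by simp)
    _ = (∏ i ∈ s, (P (A i) + 1)) / 2 ^ k := by rw [lintegral_prod_indicator_add_one hA hAm]

lemma measure_le_tsum_indicator_le [Countable ι] (hA : iIndepSet A P)
    (hAm : ∀ i, MeasurableSet (A i)) (k : ℕ) {B : ℝ≥0∞}
    (hB : ∀ s : Finset ι, ∏ i ∈ s, (P (A i) + 1) ≤ B) :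
    P {ω | k ≤ ∑' i, (A i).indicator (fun _ => (1 : ℝ≥0∞)) ω} ≤ B / 2 ^ k := by
  have hsub : {ω | k ≤ ∑' i, (A i).indicator (fun _ => (1 : ℝ≥0∞)) ω} ⊆
      ⋃ s : Finset ι, {ω | k ≤ ∑ i ∈ s, (A i).indicator (fun _ => 1) ω} := by
    intro ω hω
    simp only [Set.mem_ofPred_eq, ENNReal.tsum_eq_iSup_sum, indicator_one_eq_natCast,
      ← Nat.cast_sum] at hω
    simpa using ENNReal.exists_natCast_le_of_le_iSup hω
  have hdir : Directed (· ⊆ ·) fun s : Finset ι =>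
      {ω | k ≤ ∑ i ∈ s, (A i).indicator (fun _ => 1) ω} :=
    Monotone.directed_le fun s t hst ω (hω : k ≤ _) =>
      hω.trans (Finset.sum_le_sum_of_subset hst)
  calc _ ≤ _ := measure_mono hsub
    _ = ⨆ s : Finset ι, P {ω | k ≤ ∑ i ∈ s, (A i).indicator (fun _ => 1) ω} :=
        hdir.measure_iUnion
    _ ≤ B / 2 ^ k := iSup_le fun s =>
        (measure_le_sum_indicator_le hA hAm s k).trans (ENNReal.div_le_div_right (hB s) _)

lemma ProbabilityTheory.iIndepFun.iIndepSet_preimage {β : Type*} [MeasurableSpace β]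
    {f : ι → Ω → β} (hf : iIndepFun f P) (hfm : ∀ i, Measurable (f i)) {S : Set β}
    (hS : MeasurableSet S) : iIndepSet (fun i => f i ⁻¹' S) P :=
  (iIndepSet_iff_meas_biInter fun i => hfm i hS).2 fun _ =>
    hf.meas_biInter fun _ _ => ⟨S, hS, rfl⟩

lemma ae_eventually_tsum_indicator_lt [Countable ι] {A : ℕ → ι → Set Ω}
    (hA : ∀ n, iIndepSet (A n) P) (hAm : ∀ n i, MeasurableSet (A n i)) {k : ℕ} (hk : 0 < k)
    (hB : ∀ n (s : Finset ι),
      ∏ i ∈ s, (P (A n i) + 1) ≤ ENNReal.ofReal (exp (n * (log 2 / (2 * k))))) :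
    ∀ᵐ ω ∂P, ∀ᶠ n in atTop,
      ∑' i, (A n i).indicator (fun _ => (1 : ℝ≥0∞)) ω < (n / k + 1 : ℕ) := by
  set r := exp (-(log 2 / (2 * k)))
  have hr : r < 1 := exp_lt_one_iff.2 (neg_lt_zero.2 (by positivity))
  have hP : ∀ n : ℕ, P {ω | ((n / k + 1 : ℕ) : ℝ≥0∞) ≤ ∑' i, (A n i).indicator (fun _ => 1) ω}
      ≤ ENNReal.ofReal (r ^ n) := by
    intro n
    refine (measure_le_tsum_indicator_le (hA n) (hAm n) _ (hB n)).trans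
      (ENNReal.div_le_of_le_mul ?_)
    rw [← ENNReal.ofReal_ofNat, ← ENNReal.ofReal_pow zero_le_two,
      ← ENNReal.ofReal_mul (by positivity)]
    exact ENNReal.ofReal_le_ofReal (exp_le_exp_neg_pow_mul_two_pow n hk)
  have hsum : ∑' n, P {ω | ((n / k + 1 : ℕ) : ℝ≥0∞) ≤ ∑' i, (A n i).indicator (fun _ => 1) ω}
      ≠ ⊤ := by
    refine ne_top_of_le_ne_top ?_ (ENNReal.tsum_le_tsum hP)
    rw [← ENNReal.ofReal_tsum_of_nonneg (fun n => by positivity)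
      (summable_geometric_of_lt_one (by positivity) hr)]
    exact ENNReal.ofReal_ne_top
  filter_upwards [ae_eventually_notMem hsum] with ω hω
  exact hω.mono fun n hn => not_le.1 hn

end IndependentEvents

section ArrivalCount

variable {Ω ι : Type*}

noncomputable def arrivalCount (X : ι → Ω → ℝ≥0∞) (t : ℝ) (ω : Ω) : ℝ≥0∞ :=
  ∑' i, {ω' | X i ω' ≤ ENNReal.ofReal t}.indicator (fun _ => 1) ω

lemma monotone_arrivalCount (X : ι → Ω → ℝ≥0∞) (ω : Ω) :
    Monotone fun t => arrivalCount X t ω := fun _ _ hst =>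
  ENNReal.tsum_le_tsum fun _ => Set.indicator_le_indicator_of_subset
    (fun _ (h : _ ≤ _) => h.trans (ENNReal.ofReal_le_ofReal hst)) (fun _ => zero_le) ω

lemma arrivalCount_le_card_add_tsum_compl (X : ι → Ω → ℝ≥0∞) (F : Finset ι) (t : ℝ) (ω : Ω) :
    arrivalCount X t ω ≤
      #F + ∑' i : ↥((F : Set ι)ᶜ), {ω' | X i ω' ≤ ENNReal.ofReal t}.indicator (fun _ => 1) ω := by
  rw [arrivalCount, ← ENNReal.summable.tsum_add_tsum_compl ENNReal.summable]
  gcongr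
  refine (ENNReal.tsum_le_tsum fun _ => Set.indicator_le_self' (fun _ _ => zero_le_one) ω).trans ?_
  simp

lemma tendsto_div_ofReal_of_monotone {g : ℝ → ℝ≥0∞} (hg : Monotone g)
    (h : ∀ k : ℕ, ∃ C : ℕ, ∀ᶠ n : ℕ in atTop, (k : ℝ≥0∞) * g n ≤ n + C) :
    Tendsto (fun t => g t / ENNReal.ofReal t) atTop (nhds 0) := by
  rw [ENNReal.tendsto_nhds_zero]
  intro ε hε
  obtain ⟨m, hm⟩ := ENNReal.exists_inv_nat_lt hε.ne'
  have hm0 : (m : ℝ≥0∞) ≠ 0 := fun h0 => by simp [h0] at hm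
  obtain ⟨C, hC⟩ := h (2 * m)
  obtain ⟨N, hN⟩ := eventually_atTop.1 hC
  filter_upwards [eventually_ge_atTop (N : ℝ), eventually_ge_atTop ((C : ℝ) + 1)] with t htN htC
  have hceil : ((⌈t⌉₊ + C : ℕ) : ℝ) ≤ 2 * t := by
    push_cast
    linarith [Nat.ceil_lt_add_one (show 0 ≤ t by linarith [C.cast_nonneg (α := ℝ)])]
  have h2 : 2 * ((m : ℝ≥0∞) * g t) ≤ 2 * ENNReal.ofReal t :=
    calc 2 * ((m : ℝ≥0∞) * g t) ≤ ((2 * m : ℕ) : ℝ≥0∞) * g ⌈t⌉₊ := by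
          rw [← mul_assoc]; push_cast; gcongr; exact hg (Nat.le_ceil t)
      _ ≤ ((⌈t⌉₊ + C : ℕ) : ℝ≥0∞) := by
          exact_mod_cast hN _ (Nat.cast_le.1 (htN.trans (Nat.le_ceil t)))
      _ ≤ 2 * ENNReal.ofReal t := by
          rw [← ENNReal.ofReal_natCast, ← ENNReal.ofReal_ofNat 2, ← ENNReal.ofReal_mul zero_le_two]
          exact ENNReal.ofReal_le_ofReal hceil
  have h1 := (ENNReal.mul_le_mul_iff_right two_ne_zero ENNReal.ofNat_ne_top).1 h2
  refine (ENNReal.div_le_of_le_mul ?_).trans hm.le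
  exact (ENNReal.mul_le_iff_le_inv hm0 (ENNReal.natCast_ne_top m)).1 h1

lemma ENNReal.tsum_prod_eq_two_mul_tsum_lt {α : Type*} [LinearOrder α] {f : α → α → ℝ≥0∞}
    (hsymm : ∀ i j, f i j = f j i) (hdiag : ∀ i, f i i = 0) :
    ∑' p : α × α, f p.1 p.2 = 2 * ∑' p : {p : α × α // p.1 < p.2}, f p.1.1 p.1.2 := by
  have hsplit : ∀ p : α × α, f p.1 p.2 = {p : α × α | p.1 < p.2}.indicator (fun p => f p.1 p.2) p
      + {p : α × α | p.2 < p.1}.indicator (fun p => f p.1 p.2) p := by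
    rintro ⟨i, j⟩
    rcases lt_trichotomy i j with h | rfl | h
    · simp [h, h.not_gt]
    · simp [hdiag]
    · simp [h, h.not_gt]
  have hswap : ∑' p : {p : α × α // p.2 < p.1}, f p.1.1 p.1.2
      = ∑' p : {p : α × α // p.1 < p.2}, f p.1.1 p.1.2 := by
    rw [← (Equiv.subtypeEquiv (Equiv.prodComm α α) fun _ => Iff.rfl).tsum_eq]
    exact tsum_congr fun p => hsymm _ _
  rw [tsum_congr hsplit, ENNReal.tsum_add, ← _root_.tsum_subtype, ← _root_.tsum_subtype, two_mul]
  exact congrArg (fun x => _ + x) hswap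

/-- The slack `s < t` is needed because an infimum `≤ s` need not be attained. -/
lemma arrivalCount_iInf_le_two_mul {α : Type*} [LinearOrder α] {τ : α → α → Ω → ℝ≥0∞}
    {ω : Ω} (hsymm : ∀ i j, τ i j ω = τ j i ω) {s t : ℝ} (hs : 0 ≤ s) (hst : s < t)
    (hdiag : ∀ i, ENNReal.ofReal t < τ i i ω) :
    arrivalCount (fun i ω => ⨅ j, τ i j ω) s ω ≤
      2 * arrivalCount (fun p : {p : α × α // p.1 < p.2} => τ p.1.1 p.1.2) t ω := by
  set f : α → α → ℝ≥0∞ := fun i j => {ω' | τ i j ω' ≤ ENNReal.ofReal t}.indicator (fun _ => 1) ω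
  have hvertex : ∀ i, {ω' | ⨅ j, τ i j ω' ≤ ENNReal.ofReal s}.indicator (fun _ => 1) ω
      ≤ ∑' j, f i j := by
    intro i
    by_cases hi : ⨅ j, τ i j ω ≤ ENNReal.ofReal s
    · obtain ⟨j, hj⟩ := iInf_lt_iff.1
        (hi.trans_lt (ENNReal.ofReal_lt_ofReal_iff'.2 ⟨hst, hs.trans_lt hst⟩))
      calc _ ≤ 1 := Set.indicator_le_self' (fun _ _ => zero_le_one) ω
        _ = f i j := (Set.indicator_of_mem (s := {ω' | τ i j ω' ≤ _}) hj.le fun _ => 1).symm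
        _ ≤ ∑' j, f i j := ENNReal.le_tsum j
    · simp [hi]
  calc arrivalCount (fun i ω => ⨅ j, τ i j ω) s ω ≤ ∑' i, ∑' j, f i j :=
        ENNReal.tsum_le_tsum hvertex
    _ = ∑' p : α × α, f p.1 p.2 := ENNReal.tsum_prod.symm
    _ = 2 * arrivalCount (fun p : {p : α × α // p.1 < p.2} => τ p.1.1 p.1.2) t ω :=
        ENNReal.tsum_prod_eq_two_mul_tsum_lt
          (fun i j => by simp only [f, Set.indicator_apply, Set.mem_ofPred_eq, hsymm i j])
          fun i => Set.indicator_of_notMem (s := {ω' | τ i i ω' ≤ _}) (not_le.2 (hdiag i)) _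

variable [MeasurableSpace Ω] {P : Measure Ω}

theorem ae_eventually_mul_arrivalCount_le [Countable ι] {X : ι → Ω → ℝ≥0∞}
    (hX : iIndepFun X P) (hXm : ∀ i, Measurable (X i)) {c : ι → ℝ} (hc0 : ∀ i, 0 ≤ c i)
    (hc : Summable c)
    (hXc : ∀ i, ∀ t : ℝ, 0 ≤ t → P {ω | X i ω ≤ ENNReal.ofReal t} ≤ ENNReal.ofReal (c i * t))
    (k : ℕ) :
    ∃ C : ℕ, ∀ᵐ ω ∂P, ∀ᶠ n : ℕ in atTop, k * arrivalCount X n ω ≤ n + C := by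
  rcases Nat.eq_zero_or_pos k with rfl | hk
  · exact ⟨0, by simp⟩
  set δ := log 2 / (2 * k)
  obtain ⟨F, hF⟩ := summable_iff_vanishing.1 hc (Set.Iio δ) (Iio_mem_nhds (by positivity))
  let A (n : ℕ) (i : ↥((F : Set ι)ᶜ)) : Set Ω := {ω | X i ω ≤ ENNReal.ofReal n}
  have hAm : ∀ n i, MeasurableSet (A n i) := fun n i => hXm i measurableSet_Iic
  have hA : ∀ n, iIndepSet (A n) P := fun n =>
    (hX.precomp Subtype.val_injective).iIndepSet_preimage (fun i => hXm i) measurableSet_Iic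
  have hB : ∀ n (s : Finset ↥((F : Set ι)ᶜ)),
      ∏ i ∈ s, (P (A n i) + 1) ≤ ENNReal.ofReal (exp (n * δ)) := by
    intro n s
    refine (prod_add_one_le_ofReal_exp_sum s (fun i => mul_nonneg (hc0 i) n.cast_nonneg)
      fun i => hXc i n n.cast_nonneg).trans (ENNReal.ofReal_le_ofReal (exp_le_exp.2 ?_))
    have hdisj : Disjoint (s.map (Function.Embedding.subtype _)) F :=
      Finset.disjoint_left.2 fun _ hi => by
        obtain ⟨i, -, rfl⟩ := Finset.mem_map.1 hi
        exact i.2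
    have htail : _ ≤ δ := le_of_lt (hF _ hdisj)
    rw [Finset.sum_map] at htail
    rw [← Finset.sum_mul, mul_comm]
    exact mul_le_mul_of_nonneg_left htail n.cast_nonneg
  refine ⟨k * (#F + 1), ?_⟩
  filter_upwards [ae_eventually_tsum_indicator_lt hA hAm hk hB] with ω hω
  filter_upwards [hω] with n hn
  calc (k : ℝ≥0∞) * arrivalCount X n ω
      ≤ k * (#F + (n / k + 1 : ℕ)) := by
        gcongr
        exact (arrivalCount_le_card_add_tsum_compl X F n ω).trans (add_le_add_right hn.le _)
    _ ≤ n + (k * (#F + 1) : ℕ) := by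
        have := Nat.mul_div_le n k
        norm_cast
        nlinarith

lemma ae_eq_top_of_measure_le_ofReal_eq_zero {X : Ω → ℝ≥0∞}
    (h : ∀ t : ℝ, 0 ≤ t → P {ω | X ω ≤ ENNReal.ofReal t} = 0) : ∀ᵐ ω ∂P, X ω = ⊤ := by
  rw [ae_iff]
  refine measure_mono_null (fun ω (hω : X ω ≠ ⊤) => ?_)
    (measure_iUnion_null fun n : ℕ => h n n.cast_nonneg)
  obtain ⟨n, hn⟩ := ENNReal.exists_nat_gt hω
  exact Set.mem_iUnion.2 ⟨n, by simpa using hn.le⟩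

end ArrivalCount

theorem stmt11_general {Ω : Type*} [MeasurableSpace Ω] (P : Measure Ω) [IsProbabilityMeasure P]
    (μ : ℕ → ℕ → ℝ) (hμ0 : ∀ i j, 0 ≤ μ i j)
    (hμdiag : ∀ i, μ i i = 0)
    (hsum : Summable (fun p : ℕ × ℕ => μ p.1 p.2))
    (T : ℕ → ℕ → Ω → ℝ≥0∞) (hTsymm : ∀ i j, T i j = T j i)
    (hTmeas : ∀ i j, Measurable (T i j))
    (hindep : iIndepFun
        (fun p : {p : ℕ × ℕ // p.1 < p.2} => T p.1.1 p.1.2) P)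
    (hdist : ∀ i j, ∀ t : ℝ, 0 ≤ t →
        P {ω | T i j ω ≤ ENNReal.ofReal t} = ENNReal.ofReal (1 - Real.exp (-(μ i j) * t)))
    (vG : ℝ → Ω → ℝ≥0∞)
    (hvG : ∀ t ω, vG t ω
        = ∑' i, Set.indicator {ω' | (⨅ j, T i j ω') ≤ ENNReal.ofReal t} (fun _ => (1:ℝ≥0∞)) ω)
    (eG : ℝ → Ω → ℝ≥0∞)
    (heG : ∀ t ω, eG t ω
        = ∑' p : {p : ℕ × ℕ // p.1 < p.2},
            Set.indicator {ω' | T p.1.1 p.1.2 ω' ≤ ENNReal.ofReal t} (fun _ => (1:ℝ≥0∞)) ω) :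
    (∀ᵐ ω ∂P, Tendsto (fun t : ℝ => vG t ω / ENNReal.ofReal t) atTop (nhds 0)) ∧
    (∀ᵐ ω ∂P, Tendsto (fun t : ℝ => eG t ω / ENNReal.ofReal t) atTop (nhds 0)) := by
  have hrate : ∀ i j, ∀ t : ℝ, 0 ≤ t →
      P {ω | T i j ω ≤ ENNReal.ofReal t} ≤ ENNReal.ofReal (μ i j * t) := fun i j t ht =>
    (hdist i j t ht).trans_le
      (ENNReal.ofReal_le_ofReal (by linarith [add_one_le_exp (-(μ i j) * t)]))
  have heG' : ∀ t ω,
      eG t ω = arrivalCount (fun p : {p : ℕ × ℕ // p.1 < p.2} => T p.1.1 p.1.2) t ω := heG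
  have hvG' : ∀ t ω, vG t ω = arrivalCount (fun i ω => ⨅ j, T i j ω) t ω := hvG
  have hedges : ∀ k : ℕ, ∃ C : ℕ, ∀ᵐ ω ∂P, ∀ᶠ n : ℕ in atTop, (k : ℝ≥0∞) * eG n ω ≤ n + C := by
    simp only [heG']
    exact ae_eventually_mul_arrivalCount_le hindep (fun p => hTmeas _ _) (fun p => hμ0 _ _)
      (hsum.subtype _) fun p => hrate _ _
  choose C hC using hedges
  have hloops : ∀ᵐ ω ∂P, ∀ i, T i i ω = ⊤ := ae_all_iff.2 fun i =>
    ae_eq_top_of_measure_le_ofReal_eq_zero fun t ht => by simp [hdist i i t ht, hμdiag]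
  refine ⟨?_, ?_⟩
  · filter_upwards [ae_all_iff.2 hC, hloops] with ω hω hωT
    refine tendsto_div_ofReal_of_monotone (by simpa only [hvG'] using monotone_arrivalCount _ ω)
      fun k => ⟨C (2 * k) + 1, ?_⟩
    filter_upwards [(tendsto_add_atTop_nat 1).eventually (hω (2 * k))] with n hn
    calc (k : ℝ≥0∞) * vG n ω ≤ k * (2 * eG (n + 1 : ℕ) ω) := by
          rw [hvG', heG']
          gcongr
          exact arrivalCount_iInf_le_two_mul (fun i j => by rw [hTsymm]) n.cast_nonneg
            (by push_cast; linarith) fun i => by simp [hωT i]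
      _ = (2 * k : ℕ) * eG (n + 1 : ℕ) ω := by push_cast; ring
      _ ≤ n + (C (2 * k) + 1 : ℕ) := hn.trans_eq (by push_cast; ring)
  · filter_upwards [ae_all_iff.2 hC] with ω hω
    exact tendsto_div_ofReal_of_monotone (by simpa only [heG'] using monotone_arrivalCount _ ω)
      fun k => ⟨C k, hω k⟩

/-- In the Poisson edge model (independent arrival times `T i j ~ Exp(μ i j)`
over pairs `i < j`, `∑ μ ∈ (0,∞)`), almost surely `v(G_t) = o(t)` and `e(G_t) = o(t)`
as `t → ∞`. -/
theorem stmt11 {Ω : Type*} [MeasurableSpace Ω] (P : Measure Ω) [IsProbabilityMeasure P]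
    (μ : ℕ → ℕ → ℝ) (hμ0 : ∀ i j, 0 ≤ μ i j) (hμsymm : ∀ i j, μ i j = μ j i)
    (hμdiag : ∀ i, μ i i = 0)
    (hsum : Summable (fun p : ℕ × ℕ => μ p.1 p.2))
    (hpos : 0 < ∑' p : ℕ × ℕ, μ p.1 p.2)
    (T : ℕ → ℕ → Ω → ℝ≥0∞) (hTsymm : ∀ i j, T i j = T j i)
    (hTmeas : ∀ i j, Measurable (T i j))
    (hindep : iIndepFun
        (fun p : {p : ℕ × ℕ // p.1 < p.2} => T p.1.1 p.1.2) P)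
    (hdist : ∀ i j, ∀ t : ℝ, 0 ≤ t →
        P {ω | T i j ω ≤ ENNReal.ofReal t} = ENNReal.ofReal (1 - Real.exp (-(μ i j) * t)))
    (vG : ℝ → Ω → ℝ≥0∞)
    (hvG : ∀ t ω, vG t ω
        = ∑' i, Set.indicator {ω' | (⨅ j, T i j ω') ≤ ENNReal.ofReal t} (fun _ => (1:ℝ≥0∞)) ω)
    (eG : ℝ → Ω → ℝ≥0∞)
    (heG : ∀ t ω, eG t ω
        = ∑' p : {p : ℕ × ℕ // p.1 < p.2},
            Set.indicator {ω' | T p.1.1 p.1.2 ω' ≤ ENNReal.ofReal t} (fun _ => (1:ℝ≥0∞)) ω) :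
    (∀ᵐ ω ∂P, Tendsto (fun t : ℝ => vG t ω / ENNReal.ofReal t) atTop (nhds 0)) ∧
    (∀ᵐ ω ∂P, Tendsto (fun t : ℝ => eG t ω / ENNReal.ofReal t) atTop (nhds 0)) :=
  stmt11_general P μ hμ0 hμdiag hsum T hTsymm hTmeas hindep hdist vG hvG eG heG
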